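/- Let k ≥ 1 and 0 ≤ l ≤ 2k−2 be integers, let N > 1 be a real number, and let s ∈ ℂ with Re s > 1. For integers l' ≥ 0 and 1 ≤ j ≤ 2k−l', define p_j^{[l']}(s) = (j−1)! · C(2k−1−l', j−1) · C(2k+j−2−l', j−1) · ∏_{i=j+1}^{2k−l'} (2s + l' − i), and S^{[l']}(s) = ∑_{j=1}^{2k−l'} p_j^{[l']}(s) · ∑_{n=1}^∞ ( N^n/(N^n−1) )^{j−l'} · N^{−ns}. Then S^{[l]}(s) − S^{[l]}(s+1) = (2s + l) · S^{[l+1]}(s). -/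

import Mathlib

/-!
Write `m = 2k - l'` and `x = 2s + l'`; then `p_{i+1}^{[l']}(s)` is a polynomial `pPoly m i x`
in `x`. Since `(Nⁿ/(Nⁿ-1))^{-1} = 1 - N^{-n}`, the Dirichlet series `T_e(s)` attached to the
exponent `e` satisfies `T_e(s + 1) = T_e(s) - T_{e-1}(s)`. Substituting this into
`S^{[l]}(s + 1)` writes both sides of the claim as combinations of the `T_{i-l}(s)`, `0 ≤ i < m`,
and comparing coefficients leaves the polynomial identities
`pPoly m i x - pPoly m i (x + 2) + pPoly m (i + 1) (x + 2) = x * pPoly (m - 1) (i + 1) (x + 1)`,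
which follow from the closed form `i! C(m-1,i) C(m+i-1,i) = (m+i-1)! / (i! (m-1-i)!)`.
-/

open Complex Finset

/-- `p_j^{[l']}(s) = (j−1)! C(2k−1−l', j−1) C(2k+j−2−l', j−1) ∏_{i=j+1}^{2k−l'} (2s+l'−i)`. -/
noncomputable def pjl (k l' j : ℕ) (s : ℂ) : ℂ :=
  ((j - 1).factorial : ℂ) * ((2 * k - 1 - l').choose (j - 1) : ℂ) *
    ((2 * k + j - 2 - l').choose (j - 1) : ℂ) *
    ∏ i ∈ Finset.Icc (j + 1) (2 * k - l'), (2 * s + l' - i)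

/-- `S^{[l']}(s) = ∑_{j=1}^{2k−l'} p_j^{[l']}(s) ∑_{n≥1} (Nⁿ/(Nⁿ−1))^{j−l'} N^{−ns}`. -/
noncomputable def Sld (k l' : ℕ) (N : ℝ) (s : ℂ) : ℂ :=
  ∑ j ∈ Finset.Icc 1 (2 * k - l'), pjl k l' j s *
    ∑' n : ℕ, (((N ^ (n + 1) / (N ^ (n + 1) - 1)) ^ ((j : ℤ) - (l' : ℤ)) : ℝ) : ℂ) *
      ((N : ℂ)) ^ (-(((n + 1 : ℕ)) : ℂ) * s)

open scoped Nat

theorem sum_range_sub_sum_range_eq {R : Type*} [CommRing R] {a b r U : ℕ → R} {n : ℕ}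
    (h₀ : b 0 = r 0) (hsucc : ∀ i < n, a i - b i + b (i + 1) = r (i + 1)) (hn : a n = b n) :
    ∑ i ∈ range (n + 1), a i * U (i + 1) - ∑ i ∈ range (n + 1), b i * (U (i + 1) - U i) =
      ∑ i ∈ range (n + 1), r i * U i := by
  calc _ = ∑ i ∈ range (n + 1), ((a i - b i) * U (i + 1) + b i * U i) := by
        rw [← sum_sub_distrib]
        exact sum_congr rfl fun i _ ↦ by ring
    _ = ∑ i ∈ range n, (a i - b i + b (i + 1)) * U (i + 1) + (a n - b n) * U (n + 1) +
          b 0 * U 0 := by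
        rw [sum_add_distrib, sum_range_succ, sum_range_succ' (fun i ↦ b i * U i)]
        simp only [add_mul, sum_add_distrib]
        ring
    _ = _ := by
        rw [sum_range_succ', hn, h₀, sub_self, zero_mul, add_zero]
        congr 1
        exact sum_congr rfl fun i hi ↦ by rw [hsucc i (mem_range.1 hi)]

theorem prod_Icc_add_right {M : Type*} [CommMonoid M] (f : ℕ → M) (a b c : ℕ) :
    ∏ t ∈ Icc (a + c) (b + c), f t = ∏ t ∈ Icc a b, f (t + c) := by
  rw [← map_add_right_Icc, prod_map]
  rfl

theorem prod_Icc_eq_mul_prod_Icc_succ {M : Type*} [CommMonoid M] {a b : ℕ} (h : a ≤ b)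
    (f : ℕ → M) : ∏ t ∈ Icc a b, f t = f a * ∏ t ∈ Icc (a + 1) b, f t := by
  rw [Icc_add_one_left_eq_Ioc, mul_prod_Ioc_eq_prod_Icc h]

theorem prod_Icc_add_sub (x : ℂ) (a b c : ℕ) :
    ∏ t ∈ Icc (a + c) (b + c), (x + c - t) = ∏ t ∈ Icc a b, (x - t) := by
  rw [prod_Icc_add_right]
  push_cast
  simp only [add_sub_add_right_eq_sub]

noncomputable def pWeight (m i : ℕ) : ℂ :=
  (i ! : ℂ) * ((m - 1).choose i : ℂ) * ((m + i - 1).choose i : ℂ)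

noncomputable def pPoly (m i : ℕ) (x : ℂ) : ℂ :=
  pWeight m i * ∏ t ∈ Icc (i + 2) m, (x - t)

theorem pWeight_eq_factorial_div {m i : ℕ} (h : i < m) :
    pWeight m i = (m + i - 1)! / (i ! * (m - 1 - i)!) := by
  have h₁ := Nat.choose_mul_factorial_mul_factorial (show i ≤ m - 1 by omega)
  have h₂ := Nat.choose_mul_factorial_mul_factorial (show i ≤ m + i - 1 by omega)
  rw [show m + i - 1 - i = m - 1 by omega] at h₂
  rw [pWeight, eq_div_iff (by simp [Nat.factorial_ne_zero]), ← h₂, ← h₁]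
  push_cast
  ring

theorem pWeight_eq_zero {m i : ℕ} (h : m - 1 < i) : pWeight m i = 0 := by
  simp [pWeight, Nat.choose_eq_zero_of_lt h]

theorem exists_pWeight_eq_mul (i n : ℕ) : ∃ W : ℂ, pWeight (i + n + 3) i = W * (i + 1) ∧
    pWeight (i + n + 3) (i + 1) = W * (2 * i + n + 3) * (n + 2) ∧
    pWeight (i + n + 2) (i + 1) = W * (n + 2) * (n + 1) := by
  have hn : (n : ℂ) + 1 + 1 ≠ 0 := by norm_cast
  refine ⟨(2 * i + n + 2)! / ((i + 1)! * (n + 2)!), ?_, ?_, ?_⟩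
  · rw [pWeight_eq_factorial_div (by omega), show i + n + 3 + i - 1 = 2 * i + n + 2 by omega,
      show i + n + 3 - 1 - i = n + 2 by omega, Nat.factorial_succ i]
    push_cast
    field_simp
  · rw [pWeight_eq_factorial_div (by omega),
      show i + n + 3 + (i + 1) - 1 = 2 * i + n + 2 + 1 by omega,
      show i + n + 3 - 1 - (i + 1) = n + 1 by omega, Nat.factorial_succ (2 * i + n + 2),
      Nat.factorial_succ (n + 1)]
    push_cast
    field_simp
    ring
  · rw [pWeight_eq_factorial_div (by omega), show i + n + 2 + (i + 1) - 1 = 2 * i + n + 2 by omega,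
      show i + n + 2 - 1 - (i + 1) = n by omega, Nat.factorial_succ (n + 1), Nat.factorial_succ n]
    push_cast
    field_simp
    ring

theorem exists_prod_Icc_eq_mul (i n : ℕ) (x : ℂ) : ∃ R : ℂ,
    ∏ t ∈ Icc (i + 2) (i + n + 3), (x - t) = R * (x - (i + n + 2)) * (x - (i + n + 3)) ∧
    ∏ t ∈ Icc (i + 2) (i + n + 3), (x + 2 - t) = (x - i) * (x - (i + 1)) * R ∧
    ∏ t ∈ Icc (i + 3) (i + n + 3), (x + 2 - t) = (x - (i + 1)) * R ∧
    ∏ t ∈ Icc (i + 3) (i + n + 2), (x + 1 - t) = R := by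
  refine ⟨∏ t ∈ Icc (i + 2) (i + n + 1), (x - t), ?_, ?_, ?_, ?_⟩
  · rw [prod_Icc_succ_top (b := i + n + 2) (by omega),
      prod_Icc_succ_top (b := i + n + 1) (by omega)]
    push_cast
    ring
  · have hshift : ∏ t ∈ Icc (i + 2) (i + n + 3), (x + 2 - t) =
        ∏ t ∈ Icc i (i + n + 1), (x - t) := by
      simpa using prod_Icc_add_sub x i (i + n + 1) 2
    rw [hshift, prod_Icc_eq_mul_prod_Icc_succ (by omega), prod_Icc_eq_mul_prod_Icc_succ (by omega)]
    push_cast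
    ring
  · have hshift : ∏ t ∈ Icc (i + 3) (i + n + 3), (x + 2 - t) =
        ∏ t ∈ Icc (i + 1) (i + n + 1), (x - t) := by
      simpa using prod_Icc_add_sub x (i + 1) (i + n + 1) 2
    rw [hshift, prod_Icc_eq_mul_prod_Icc_succ (by omega)]
    push_cast
    ring
  · simpa using prod_Icc_add_sub x (i + 2) (i + n + 1) 1

theorem pPoly_sub_add_of_add_three (i n : ℕ) (x : ℂ) :
    pPoly (i + n + 3) i x - pPoly (i + n + 3) i (x + 2) + pPoly (i + n + 3) (i + 1) (x + 2) =
      x * pPoly (i + n + 2) (i + 1) (x + 1) := by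
  obtain ⟨W, hA, hB, hD⟩ := exists_pWeight_eq_mul i n
  obtain ⟨R, h₁, h₂, h₃, h₄⟩ := exists_prod_Icc_eq_mul i n x
  simp only [pPoly]
  rw [show i + 1 + 2 = i + 3 from rfl, h₁, h₂, h₃, h₄, hA, hB, hD]
  ring

theorem pPoly_sub_add_of_add_two (i : ℕ) (x : ℂ) :
    pPoly (i + 2) i x - pPoly (i + 2) i (x + 2) + pPoly (i + 2) (i + 1) (x + 2) = 0 := by
  have hi : (i : ℂ) + 1 ≠ 0 := by norm_cast
  simp only [pPoly, pWeight_eq_factorial_div (show i < i + 2 by omega),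
    pWeight_eq_factorial_div (show i + 1 < i + 2 by omega), Icc_self, prod_singleton,
    Icc_eq_empty (show ¬ i + 1 + 2 ≤ i + 2 by omega), prod_empty,
    show i + 2 + i - 1 = 2 * i + 1 by omega, show i + 2 + (i + 1) - 1 = 2 * i + 1 + 1 by omega,
    show i + 2 - 1 - i = 1 by omega, show i + 2 - 1 - (i + 1) = 0 by omega, Nat.factorial_succ]
  push_cast
  field_simp
  ring

theorem pPoly_sub_add {m i : ℕ} (h : i + 2 ≤ m) (x : ℂ) :
    pPoly m i x - pPoly m i (x + 2) + pPoly m (i + 1) (x + 2) =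
      x * pPoly (m - 1) (i + 1) (x + 1) := by
  rcases h.eq_or_lt with rfl | h
  · rw [pPoly_sub_add_of_add_two, pPoly, pWeight_eq_zero (by omega)]
    ring
  · obtain ⟨n, rfl⟩ : ∃ n, m = i + n + 3 := ⟨m - i - 3, by omega⟩
    exact pPoly_sub_add_of_add_three i n x

theorem pPoly_zero_add_two {m : ℕ} (h : 2 ≤ m) (x : ℂ) :
    pPoly m 0 (x + 2) = x * pPoly (m - 1) 0 (x + 1) := by
  obtain ⟨n, rfl⟩ : ∃ n, m = n + 2 := ⟨m - 2, by omega⟩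
  have h₁ : ∏ t ∈ Icc 2 (n + 2), (x + 2 - t) = ∏ t ∈ Icc 0 n, (x - t) := by
    simpa using prod_Icc_add_sub x 0 n 2
  have h₂ : ∏ t ∈ Icc 2 (n + 1), (x + 1 - t) = ∏ t ∈ Icc 1 n, (x - t) := by
    simpa using prod_Icc_add_sub x 1 n 1
  simp only [pPoly, pWeight, zero_add, Nat.factorial_zero, Nat.choose_zero_right,
    show n + 2 - 1 = n + 1 from rfl, h₁, h₂, prod_Icc_eq_mul_prod_Icc_succ (Nat.zero_le n)]
  push_cast
  ring

theorem pPoly_pred_self (m : ℕ) (x y : ℂ) : pPoly m (m - 1) x = pPoly m (m - 1) y := by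
  simp [pPoly, Icc_eq_empty (show ¬ m - 1 + 2 ≤ m by omega)]

theorem pjl_eq_pPoly {k l' : ℕ} (hl : l' ≤ 2 * k) (i : ℕ) (s : ℂ) :
    pjl k l' (i + 1) s = pPoly (2 * k - l') i (2 * s + l') := by
  rw [pjl, pPoly, pWeight, Nat.add_sub_cancel, show 2 * k - 1 - l' = 2 * k - l' - 1 by omega,
    show 2 * k + (i + 1) - 2 - l' = 2 * k - l' + i - 1 by omega]

theorem cpow_neg_natCast_mul (x : ℂ) (n : ℕ) (s : ℂ) :
    x ^ (-(n : ℂ) * s) = (x ^ (-s)) ^ n := by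
  rw [neg_mul, ← mul_neg, Complex.cpow_nat_mul]

theorem one_le_div_sub_one_of_one_lt {P : ℝ} (hP : 1 < P) : 1 ≤ P / (P - 1) := by
  rw [le_div_iff₀ (by linarith)]
  linarith

theorem zpow_div_sub_one_le {N : ℝ} (hN : 1 < N) (n : ℕ) (e : ℤ) :
    (N ^ (n + 1) / (N ^ (n + 1) - 1)) ^ e ≤ (N / (N - 1)) ^ e.natAbs := by
  have hP : 1 < N ^ (n + 1) := one_lt_pow₀ hN n.succ_ne_zero
  have ht : 1 ≤ N ^ (n + 1) / (N ^ (n + 1) - 1) := one_le_div_sub_one_of_one_lt hP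
  have htN : N ^ (n + 1) / (N ^ (n + 1) - 1) ≤ N / (N - 1) := by
    rw [div_le_div_iff₀ (by linarith) (by linarith)]
    have hNP : N ≤ N ^ (n + 1) := le_self_pow₀ hN.le n.succ_ne_zero
    nlinarith
  calc _ ≤ (N ^ (n + 1) / (N ^ (n + 1) - 1)) ^ (e.natAbs : ℤ) :=
        zpow_le_zpow_right₀ ht Int.le_natAbs
    _ ≤ (N / (N - 1)) ^ e.natAbs := by
        rw [zpow_natCast]
        exact pow_le_pow_left₀ (by linarith) htN _

section Series

variable {N : ℝ} {s : ℂ}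

/-- `(1 / log N) · (d/ds) log Z_γ^{(e)}(s)` for a class of norm `N`, as a Dirichlet series. -/
noncomputable def logDerivZSeries (N : ℝ) (e : ℤ) (s : ℂ) : ℂ :=
  ∑' n : ℕ, (((N ^ (n + 1) / (N ^ (n + 1) - 1)) ^ e : ℝ) : ℂ) *
      ((N : ℂ)) ^ (-(((n + 1 : ℕ)) : ℂ) * s)

theorem summable_logDerivZSeries (hN : 1 < N) (hs : 0 < s.re) (e : ℤ) :
    Summable fun n : ℕ ↦ (((N ^ (n + 1) / (N ^ (n + 1) - 1)) ^ e : ℝ) : ℂ) *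
      ((N : ℂ)) ^ (-(((n + 1 : ℕ)) : ℂ) * s) := by
  have hN₀ : 0 < N := by linarith
  set z : ℂ := (N : ℂ) ^ (-s)
  have hz : ‖z‖ < 1 := by
    rw [Complex.norm_cpow_eq_rpow_re_of_pos hN₀, neg_re]
    exact Real.rpow_lt_one_of_one_lt_of_neg hN (by linarith)
  set C : ℝ := (N / (N - 1)) ^ e.natAbs
  refine Summable.of_norm_bounded
    ((summable_geometric_of_lt_one (norm_nonneg z) hz).mul_left (C * ‖z‖)) fun n ↦ ?_
  have ht : 1 ≤ N ^ (n + 1) / (N ^ (n + 1) - 1) :=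
    one_le_div_sub_one_of_one_lt (one_lt_pow₀ hN n.succ_ne_zero)
  have hbound := zpow_div_sub_one_le hN n e
  rw [cpow_neg_natCast_mul, norm_mul, norm_pow, Complex.norm_real, Real.norm_eq_abs,
    abs_of_nonneg (zpow_nonneg (by linarith) e)]
  calc _ ≤ C * ‖z‖ ^ (n + 1) := by gcongr
    _ = _ := by ring

theorem logDerivZSeries_add_one (hN : 1 < N) (hs : 0 < s.re) (e : ℤ) :
    logDerivZSeries N e (s + 1) = logDerivZSeries N e s - logDerivZSeries N (e - 1) s := by
  rw [logDerivZSeries, logDerivZSeries, logDerivZSeries,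
    ← (summable_logDerivZSeries hN hs e).tsum_sub (summable_logDerivZSeries hN hs (e - 1))]
  refine tsum_congr fun n ↦ ?_
  have hP : 1 < N ^ (n + 1) := one_lt_pow₀ hN n.succ_ne_zero
  set t := N ^ (n + 1) / (N ^ (n + 1) - 1)
  have ht : t ^ e - t ^ (e - 1) = t ^ e * (N ^ (n + 1))⁻¹ := by
    rw [zpow_sub_one₀ (by positivity), inv_div]
    field_simp
    ring
  have hz : (N : ℂ) ^ (-(s + 1)) = (N : ℂ) ^ (-s) * (N : ℂ)⁻¹ := by
    rw [neg_add, Complex.cpow_add _ _ (by exact_mod_cast (by linarith : N ≠ 0)), cpow_neg_one]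
  simp only [cpow_neg_natCast_mul]
  rw [hz, mul_pow, inv_pow]
  have := congrArg (fun r : ℝ ↦ (r : ℂ)) ht
  push_cast at this ⊢
  linear_combination -((N : ℂ) ^ (-s)) ^ (n + 1) * this

end Series

theorem Sld_eq_sum_range {k l' : ℕ} (hl : l' ≤ 2 * k) (N : ℝ) (s : ℂ) :
    Sld k l' N s = ∑ i ∈ range (2 * k - l'),
      pPoly (2 * k - l') i (2 * s + l') * logDerivZSeries N ((i + 1 : ℕ) - l') s := by
  rw [Sld, ← Ico_add_one_right_eq_Icc, sum_Ico_eq_sum_range, Nat.add_sub_cancel]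
  exact sum_congr rfl fun i _ ↦ by rw [add_comm 1 i, pjl_eq_pPoly hl]; rfl

/-- The difference recursion `S^{[l]}(s) − S^{[l]}(s+1) = (2s+l) S^{[l+1]}(s)`. -/
theorem Sld_difference (k : ℕ) (hk : 1 ≤ k) (l : ℕ) (hl : l ≤ 2 * k - 2)
    (N : ℝ) (hN : 1 < N) (s : ℂ) (hs : 1 < s.re) :
    Sld k l N s - Sld k l N (s + 1) = (2 * s + l) * Sld k (l + 1) N s := by
  obtain ⟨n, hn⟩ : ∃ n, 2 * k - l = n + 1 := ⟨2 * k - l - 1, by omega⟩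
  set x : ℂ := 2 * s + l
  set T : ℕ → ℂ := fun i ↦ logDerivZSeries N ((i : ℤ) - l) s
  have hS : Sld k l N s = ∑ i ∈ range (n + 1), pPoly (n + 1) i x * T (i + 1) := by
    rw [Sld_eq_sum_range (by omega), hn]
  have hS_shift : Sld k l N (s + 1) =
      ∑ i ∈ range (n + 1), pPoly (n + 1) i (x + 2) * (T (i + 1) - T i) := by
    rw [Sld_eq_sum_range (by omega), hn]
    refine sum_congr rfl fun i _ ↦ ?_
    rw [logDerivZSeries_add_one hN (by linarith), show 2 * (s + 1) + (l : ℂ) = x + 2 by ring,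
      show ((i + 1 : ℕ) : ℤ) - l - 1 = (i : ℤ) - l by push_cast; ring]
  have hS_next : Sld k (l + 1) N s = ∑ i ∈ range (n + 1), pPoly n i (x + 1) * T i := by
    rw [Sld_eq_sum_range (by omega), show 2 * k - (l + 1) = n by omega, sum_range_succ, pPoly,
      pWeight_eq_zero (by omega), zero_mul, zero_mul, add_zero]
    refine sum_congr rfl fun i _ ↦ ?_
    rw [show 2 * s + ((l + 1 : ℕ) : ℂ) = x + 1 by push_cast; ring,
      show ((i + 1 : ℕ) : ℤ) - ((l + 1 : ℕ) : ℤ) = (i : ℤ) - l by push_cast; ring]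
  rw [hS, hS_shift, hS_next, mul_sum]
  simp only [← mul_assoc]
  exact sum_range_sub_sum_range_eq (pPoly_zero_add_two (by omega) x)
    (fun i hi ↦ pPoly_sub_add (by omega) x) (pPoly_pred_self (n + 1) x (x + 2))
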